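/- arXiv:2112.07184 — 3 statements merged into one kernel-verified Lean document; each statement's English description precedes it below -/
import Mathlib

section
/- Let ℓ be a proper loss with 0 ≤ ℓ(y,p) ≤ B. Fix a sequence of outcomes y₁,…,y_T ∈ {0,1} and predictions p₁,…,p_T taking values in {0, 1/N, …, 1}. For each i, let T_i = #{t : p_t = i/N} and ρ(i) = (Σ_{t: p_t = i/N} y_t)/T_i (when T_i > 0). Then for any i with T_i > 0 and any j ∈ {0,…,N}, Σ_{t: p_t = i/N} (ℓ(y_t, i/N) - ℓ(y_t, j/N)) ≤ 2B·T_i·|ρ(i) - i/N|. -/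
/-!
Pooling the rounds in which `i/N` was predicted, the loss of any fixed prediction `q` on them is
`T_i` times the expected loss of `q` under a Bernoulli(`ρ(i)`) outcome. Properness at `ρ(i)` bounds
the gain of switching from `p = i/N` to `q` by the gain of switching to `ρ(i)`, and replacing the
outcome distribution `ρ(i)` by `p` and back costs at most `B |ρ(i) - p|` each way, since the
expected loss is affine in the outcome probability with slope `ℓ 1 r - ℓ 0 r ∈ [-B, B]`.
-/

open Finset Set

def expectedLoss (ℓ : ℝ → ℝ → ℝ) (p q : ℝ) : ℝ := p * ℓ 1 q + (1 - p) * ℓ 0 q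

def IsProperLoss (ℓ : ℝ → ℝ → ℝ) : Prop :=
  ∀ p ∈ Icc (0 : ℝ) 1, ∀ q ∈ Icc (0 : ℝ) 1, expectedLoss ℓ p p ≤ expectedLoss ℓ p q

section ProperLoss

variable {ℓ : ℝ → ℝ → ℝ} {B : ℝ}

theorem expectedLoss_sub_expectedLoss (a b r : ℝ) :
    expectedLoss ℓ a r - expectedLoss ℓ b r = (a - b) * (ℓ 1 r - ℓ 0 r) := by
  unfold expectedLoss; ring

theorem expectedLoss_sub_expectedLoss_le {r : ℝ} (hr : |ℓ 1 r - ℓ 0 r| ≤ B) (a b : ℝ) :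
    expectedLoss ℓ a r - expectedLoss ℓ b r ≤ B * |a - b| := by
  rw [expectedLoss_sub_expectedLoss]
  calc (a - b) * (ℓ 1 r - ℓ 0 r) ≤ |a - b| * |ℓ 1 r - ℓ 0 r| := by
        rw [← abs_mul]; exact le_abs_self _
    _ ≤ |a - b| * B := mul_le_mul_of_nonneg_left hr (abs_nonneg _)
    _ = B * |a - b| := mul_comm _ _

theorem abs_loss_one_sub_loss_zero_le
    (hbound : ∀ y ∈ ({0, 1} : Set ℝ), ∀ p ∈ Icc (0 : ℝ) 1, 0 ≤ ℓ y p ∧ ℓ y p ≤ B)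
    {r : ℝ} (hr : r ∈ Icc (0 : ℝ) 1) : |ℓ 1 r - ℓ 0 r| ≤ B := by
  obtain ⟨h1, h1B⟩ := hbound 1 (by simp) r hr
  obtain ⟨h0, h0B⟩ := hbound 0 (by simp) r hr
  exact abs_sub_le_of_nonneg_of_le h1 h1B h0 h0B

theorem IsProperLoss.expectedLoss_sub_le (hproper : IsProperLoss ℓ)
    (hbound : ∀ y ∈ ({0, 1} : Set ℝ), ∀ p ∈ Icc (0 : ℝ) 1, 0 ≤ ℓ y p ∧ ℓ y p ≤ B)
    {ρ p q : ℝ} (hρ : ρ ∈ Icc (0 : ℝ) 1) (hp : p ∈ Icc (0 : ℝ) 1) (hq : q ∈ Icc (0 : ℝ) 1) :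
    expectedLoss ℓ ρ p - expectedLoss ℓ ρ q ≤ 2 * B * |ρ - p| := by
  have hρq := hproper ρ hρ q hq
  have hpρ := hproper p hp ρ hρ
  have hshift_p := expectedLoss_sub_expectedLoss_le (abs_loss_one_sub_loss_zero_le hbound hp) ρ p
  have hshift_ρ := expectedLoss_sub_expectedLoss_le (abs_loss_one_sub_loss_zero_le hbound hρ) p ρ
  rw [abs_sub_comm] at hshift_ρ
  linarith

end ProperLoss

section Pooling

variable {ι : Type*} (s : Finset ι) (y : ι → ℝ)

theorem sum_div_card_mem_Icc (hy : ∀ t ∈ s, y t ∈ Icc (0 : ℝ) 1) :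
    (∑ t ∈ s, y t) / #s ∈ Icc (0 : ℝ) 1 := by
  refine ⟨div_nonneg (sum_nonneg fun t ht => (hy t ht).1) (Nat.cast_nonneg _), ?_⟩
  refine div_le_one_of_le₀ ?_ (Nat.cast_nonneg _)
  simpa using sum_le_card_nsmul s y 1 fun t ht => (hy t ht).2

theorem sum_loss_eq_card_mul_expectedLoss (ℓ : ℝ → ℝ → ℝ)
    (hy : ∀ t ∈ s, y t = 0 ∨ y t = 1) (hs : s.Nonempty) (r : ℝ) :
    ∑ t ∈ s, ℓ (y t) r = #s * expectedLoss ℓ ((∑ t ∈ s, y t) / #s) r := by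
  have hbinary : ∀ t ∈ s, ℓ (y t) r = expectedLoss ℓ (y t) r := by
    intro t ht
    rcases hy t ht with h | h <;> simp [h, expectedLoss]
  have hcard : (#s : ℝ) ≠ 0 := by exact_mod_cast hs.card_pos.ne'
  rw [sum_congr rfl hbinary]
  simp only [expectedLoss, sum_add_distrib, ← sum_mul, sum_sub_distrib, sum_const, nsmul_eq_mul,
    mul_one]
  field_simp

end Pooling

theorem natCast_div_mem_Icc {N : ℕ} (k : Fin (N + 1)) : (k : ℝ) / N ∈ Icc (0 : ℝ) 1 :=
  ⟨by positivity, div_le_one_of_le₀ (by exact_mod_cast Nat.lt_succ_iff.mp k.isLt) (Nat.cast_nonneg _)⟩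

theorem switching_gain_le_general (N T : ℕ) (ℓ : ℝ → ℝ → ℝ) (B : ℝ)
    (y : Fin T → ℝ) (hy : ∀ t, y t = 0 ∨ y t = 1)
    (pred : Fin T → Fin (N + 1))
    (hproper : ∀ p ∈ Set.Icc (0:ℝ) 1, ∀ q ∈ Set.Icc (0:ℝ) 1,
      p * ℓ 1 p + (1 - p) * ℓ 0 p ≤ p * ℓ 1 q + (1 - p) * ℓ 0 q)
    (hbound : ∀ y' ∈ ({0, 1} : Set ℝ), ∀ p ∈ Set.Icc (0:ℝ) 1, 0 ≤ ℓ y' p ∧ ℓ y' p ≤ B) :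
    ∀ i j : Fin (N + 1),
      0 < ({t | pred t = i} : Finset (Fin T)).card →
      ∑ t ∈ ({t | pred t = i} : Finset (Fin T)),
          (ℓ (y t) ((i : ℝ) / N) - ℓ (y t) ((j : ℝ) / N)) ≤
        2 * B * ({t | pred t = i} : Finset (Fin T)).card *
          |(∑ t ∈ ({t | pred t = i} : Finset (Fin T)), y t) /
              ({t | pred t = i} : Finset (Fin T)).card - (i : ℝ) / N| := by
  intro i j hcard
  set s : Finset (Fin T) := {t | pred t = i}
  have hs : s.Nonempty := card_pos.mp hcard
  have hρ := sum_div_card_mem_Icc s y fun t _ => by rcases hy t with h | h <;> simp [h]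
  rw [sum_sub_distrib, sum_loss_eq_card_mul_expectedLoss s y ℓ (fun t _ => hy t) hs,
    sum_loss_eq_card_mul_expectedLoss s y ℓ (fun t _ => hy t) hs, ← mul_sub, mul_comm (2 * B),
    mul_assoc]
  exact mul_le_mul_of_nonneg_left
    (IsProperLoss.expectedLoss_sub_le hproper hbound hρ (natCast_div_mem_Icc i)
      (natCast_div_mem_Icc j))
    (Nat.cast_nonneg _)

/-- Internal-regret switching gain bound for a proper bounded loss:
for any prediction index `i` played a positive number of times and any alternative `j`,
the gain from retrospectively switching all plays of `i/N` to `j/N` is at most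
`2 B T_i |ρ(i) - i/N|`. -/
theorem switching_gain_le (N T : ℕ) (ℓ : ℝ → ℝ → ℝ) (B : ℝ)
    (y : Fin T → ℝ) (hy : ∀ t, y t = 0 ∨ y t = 1)
    (pred : Fin T → Fin (N + 1))
    (hproper : ∀ p ∈ Set.Icc (0:ℝ) 1, ∀ q ∈ Set.Icc (0:ℝ) 1,
      p * ℓ 1 p + (1 - p) * ℓ 0 p ≤ p * ℓ 1 q + (1 - p) * ℓ 0 q)
    (hbound : ∀ y' ∈ ({0, 1} : Set ℝ), ∀ p ∈ Set.Icc (0:ℝ) 1, 0 ≤ ℓ y' p ∧ ℓ y' p ≤ B)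
    (hN : 0 < N) :
    ∀ i j : Fin (N + 1),
      0 < ({t | pred t = i} : Finset (Fin T)).card →
      ∑ t ∈ ({t | pred t = i} : Finset (Fin T)),
          (ℓ (y t) ((i : ℝ) / N) - ℓ (y t) ((j : ℝ) / N)) ≤
        2 * B * ({t | pred t = i} : Finset (Fin T)).card *
          |(∑ t ∈ ({t | pred t = i} : Finset (Fin T)), y t) /
              ({t | pred t = i} : Finset (Fin T)).card - (i : ℝ) / N| :=
  switching_gain_le_general N T ℓ B y hy pred hproper hbound
end

section
/- Let ℓ be convex in the first argument and for each j ∈ {1,…,M}, suppose the calibration error of sub-forecaster j satisfies C^(j) = Σ_{i=0}^N (T_{j,i}/T_j)·ℓ(ρ_{j,i}, i/N) ≤ R_j + ε, where T_j = Σ_i T_{j,i} > 0. Then the merged forecaster's calibration error C = Σ_{i=0}^N ((Σ_j T_{j,i})/T)·ℓ(ρ_i, i/N), where T = Σ_j T_j and ρ_i = (Σ_j T_{j,i}·ρ_{j,i})/(Σ_j T_{j,i}) (taking the term to be 0 when Σ_j T_{j,i} = 0), satisfies C ≤ Σ_{j=1}^M (T_j/T)·R_j + ε. -/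
/-!
Pooling the rounds on which the sub-forecasters predicted `i/N` replaces the losses
`ℓ(ρ_{j,i}, i/N)` by the loss at their `T_{j,i}`-weighted average, which by Jensen's inequality is
at most the weighted average of the losses. Summing over `i` and regrouping by sub-forecaster
turns the merged error into the `T_j/T`-weighted average of the errors `C^(j) ≤ R_j + ε`.
-/

open Finset

/-- When the weights sum to zero the left side is `0`, whatever junk value the quotient takes. -/
theorem ConvexOn.sum_mul_map_div_sum_le {ι : Type*} {s : Set ℝ} {f : ℝ → ℝ}
    (hf : ConvexOn ℝ s f) (t : Finset ι) {w p : ι → ℝ} (hw : ∀ i ∈ t, 0 ≤ w i)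
    (hp : ∀ i ∈ t, p i ∈ s) :
    (∑ i ∈ t, w i) * f ((∑ i ∈ t, w i * p i) / ∑ i ∈ t, w i) ≤ ∑ i ∈ t, w i * f (p i) := by
  rcases (sum_nonneg hw).eq_or_lt with hzero | hpos
  · have hw0 : ∀ i ∈ t, w i = 0 := (sum_eq_zero_iff_of_nonneg hw).mp hzero.symm
    simp only [← hzero, zero_mul]
    exact (sum_eq_zero fun i hi => by simp [hw0 i hi]).ge
  · have jensen := hf.map_centerMass_le hw hpos hp
    simp only [centerMass, smul_eq_mul, Function.comp_apply] at jensen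
    rw [inv_mul_eq_div] at jensen
    rw [← le_inv_mul_iff₀ hpos]
    exact jensen

theorem sum_mul_add_le_of_sum_le_one {ι : Type*} (t : Finset ι) {a : ι → ℝ} (R : ι → ℝ)
    {ε : ℝ} (ha : ∑ j ∈ t, a j ≤ 1) (hε : 0 ≤ ε) :
    ∑ j ∈ t, a j * (R j + ε) ≤ ∑ j ∈ t, a j * R j + ε := by
  simp only [mul_add, sum_add_distrib, ← sum_mul]
  gcongr
  exact mul_le_of_le_one_left hε ha

theorem natCast_div_natCast_mem_Icc {i N : ℕ} (h : i ≤ N) : (i / N : ℝ) ∈ Set.Icc 0 1 :=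
  ⟨by positivity, div_le_one_of_le₀ (by exact_mod_cast h) (Nat.cast_nonneg N)⟩

theorem merged_calibration_bound_general (M N : ℕ) (ℓ : ℝ → ℝ → ℝ)
    (hconv : ∀ x ∈ Set.Icc (0:ℝ) 1, ConvexOn ℝ (Set.Icc (0:ℝ) 1) (fun r => ℓ r x))
    (Tji : Fin M → Fin (N + 1) → ℕ)
    (ρj : Fin M → Fin (N + 1) → ℝ) (hρj : ∀ j i, ρj j i ∈ Set.Icc (0:ℝ) 1)
    (R : Fin M → ℝ) (ε : ℝ) (hε : 0 ≤ ε)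
    (Tj : Fin M → ℕ) (hTjpos : ∀ j, 0 < Tj j)
    (T : ℕ) (hT : T = ∑ j, Tj j)
    (hcal : ∀ j, ∑ i : Fin (N + 1),
      ((Tji j i : ℝ) / (Tj j : ℝ)) * ℓ (ρj j i) ((i : ℝ) / N) ≤ R j + ε) :
    ∑ i : Fin (N + 1),
        (if (∑ j, Tji j i) = 0 then 0 else
          ((∑ j, (Tji j i : ℝ)) / (T : ℝ)) *
            ℓ ((∑ j, (Tji j i : ℝ) * ρj j i) / (∑ j, (Tji j i : ℝ))) ((i : ℝ) / N)) ≤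
      ∑ j, ((Tj j : ℝ) / (T : ℝ)) * R j + ε := by
  have pooled_le (i : Fin (N + 1)) :=
    (hconv _ (natCast_div_natCast_mem_Icc i.is_le)).sum_mul_map_div_sum_le univ
      (w := fun j => (Tji j i : ℝ)) (fun j _ => Nat.cast_nonneg _) (fun j _ => hρj j i)
  have hweights : ∑ j, (Tj j : ℝ) / T ≤ 1 := by
    rw [← sum_div, hT, Nat.cast_sum]
    exact div_self_le_one _
  calc _ ≤ ∑ i : Fin (N + 1), (T : ℝ)⁻¹ * ∑ j, (Tji j i : ℝ) * ℓ (ρj j i) ((i : ℝ) / N) := by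
        gcongr with i
        rw [div_eq_inv_mul, mul_assoc]
        split_ifs with hzero
        · have pooled_nonneg := pooled_le i
          rw [show (∑ j, (Tji j i : ℝ)) = 0 by exact_mod_cast hzero, zero_mul] at pooled_nonneg
          exact mul_nonneg (by positivity) pooled_nonneg
        · exact mul_le_mul_of_nonneg_left (pooled_le i) (by positivity)
    _ = ∑ j, ((Tj j : ℝ) / T) *
          ∑ i : Fin (N + 1), ((Tji j i : ℝ) / Tj j) * ℓ (ρj j i) ((i : ℝ) / N) := by
        simp only [mul_sum]
        rw [sum_comm]
        refine sum_congr rfl fun j _ => sum_congr rfl fun i _ => ?_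
        have : (Tj j : ℝ) ≠ 0 := by exact_mod_cast (hTjpos j).ne'
        field_simp
    _ ≤ ∑ j, ((Tj j : ℝ) / T) * (R j + ε) := by
        gcongr with j
        exact hcal j
    _ ≤ _ := sum_mul_add_le_of_sum_le_one univ R hweights hε

/-- Calibration of the merged forecaster: if each sub-forecaster `j` has
calibration error `C^(j) ≤ R_j + ε` (measured by a loss `ℓ` convex in its first
argument), then the merged forecaster satisfies `C ≤ ∑_j (T_j/T) R_j + ε`. -/
theorem merged_calibration_bound (M N : ℕ) (ℓ : ℝ → ℝ → ℝ)
    (hℓ0 : ∀ r ∈ Set.Icc (0:ℝ) 1, ∀ x ∈ Set.Icc (0:ℝ) 1, 0 ≤ ℓ r x)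
    (hconv : ∀ x ∈ Set.Icc (0:ℝ) 1, ConvexOn ℝ (Set.Icc (0:ℝ) 1) (fun r => ℓ r x))
    (Tji : Fin M → Fin (N + 1) → ℕ)
    (ρj : Fin M → Fin (N + 1) → ℝ) (hρj : ∀ j i, ρj j i ∈ Set.Icc (0:ℝ) 1)
    (R : Fin M → ℝ) (hR : ∀ j, 0 ≤ R j) (ε : ℝ) (hε : 0 ≤ ε)
    (Tj : Fin M → ℕ) (hTj : ∀ j, Tj j = ∑ i, Tji j i) (hTjpos : ∀ j, 0 < Tj j)
    (T : ℕ) (hT : T = ∑ j, Tj j)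
    (hN : 0 < N)
    (hcal : ∀ j, ∑ i : Fin (N + 1),
      ((Tji j i : ℝ) / (Tj j : ℝ)) * ℓ (ρj j i) ((i : ℝ) / N) ≤ R j + ε) :
    ∑ i : Fin (N + 1),
        (if (∑ j, Tji j i) = 0 then 0 else
          ((∑ j, (Tji j i : ℝ)) / (T : ℝ)) *
            ℓ ((∑ j, (Tji j i : ℝ) * ρj j i) / (∑ j, (Tji j i : ℝ))) ((i : ℝ) / N)) ≤
      ∑ j, ((Tj j : ℝ) / (T : ℝ)) * R j + ε :=
  merged_calibration_bound_general M N ℓ hconv Tji ρj hρj R ε hε Tj hTjpos T hT hcal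
end

section
/- If ℓ : [0,1] × [0,1] → ℝ≥0 is continuous, convex in its first argument, and ℓ(x,x) = 0 with ℓ(x,y) > 0 for x ≠ y, then for every ε > 0 there exists δ > 0 such that for all weights w_i ∈ [0,1] with Σ w_i ≤ 1 and all ρ_i, x_i ∈ [0,1] (i = 0,…,N): Σ_i w_i·ℓ(ρ_i, x_i) ≤ δ implies Σ_i w_i·|ρ_i - x_i| ≤ ε. -/
open Finset

/-! Off a `t`-neighbourhood of the diagonal the square `[0,1]²` is compact and `ℓ` is
positive there, so `ℓ ≥ c > 0` on it. Hence `|ρ - x| ≤ t + ℓ(ρ, x) / c` pointwise (using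
`|ρ - x| ≤ 1`), and averaging with weights of total mass at most `1` gives
`∑ wᵢ |ρᵢ - xᵢ| ≤ t + (∑ wᵢ ℓ(ρᵢ, xᵢ)) / c`; take `t = ε/2` and `δ = c ε/2`. -/

theorem exists_pos_le_of_le_dist {α : Type*} [PseudoMetricSpace α] {s : Set (α × α)}
    (hs : IsCompact s) {f : α × α → ℝ} (hf : ContinuousOn f s)
    (hpos : ∀ z ∈ s, z.1 ≠ z.2 → 0 < f z) {t : ℝ} (ht : 0 < t) :
    ∃ c > 0, ∀ z ∈ s, t ≤ dist z.1 z.2 → c ≤ f z := by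
  have hclosed : IsClosed {z : α × α | t ≤ dist z.1 z.2} :=
    isClosed_le continuous_const (continuous_fst.dist continuous_snd)
  obtain ⟨c, hc, hcle⟩ := (hs.inter_right hclosed).exists_forall_le'
    (hf.mono Set.inter_subset_left) (a := 0) fun z ⟨hz, hzt⟩ =>
      hpos z hz fun h => by
        have hzt : t ≤ dist z.1 z.2 := hzt
        rw [h, dist_self] at hzt
        linarith
  exact ⟨c, hc, fun z hz hzt => hcle z ⟨hz, hzt⟩⟩

theorem le_add_div_of_le_imp {d t c l : ℝ} (hd : d ≤ 1) (ht : 0 ≤ t) (hc : 0 < c)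
    (hl : 0 ≤ l) (h : t ≤ d → c ≤ l) : d ≤ t + l / c := by
  by_cases htd : t ≤ d
  · have : 1 ≤ l / c := (one_le_div hc).2 (h htd)
    linarith
  · have : 0 ≤ l / c := div_nonneg hl hc.le
    linarith

theorem sum_mul_le_add_sum_mul_div {ι : Type*} [Fintype ι] {w d l : ι → ℝ} {t c : ℝ}
    (hw : ∀ i, 0 ≤ w i) (hwsum : ∑ i, w i ≤ 1) (ht : 0 ≤ t)
    (hdl : ∀ i, d i ≤ t + l i / c) :
    ∑ i, w i * d i ≤ t + (∑ i, w i * l i) / c :=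
  calc ∑ i, w i * d i
      ≤ ∑ i, w i * (t + l i / c) :=
        sum_le_sum fun i _ => mul_le_mul_of_nonneg_left (hdl i) (hw i)
    _ = (∑ i, w i) * t + (∑ i, w i * l i) / c := by
        simp only [mul_add, sum_add_distrib, sum_mul, sum_div, mul_div_assoc]
    _ ≤ t + (∑ i, w i * l i) / c := by gcongr; exact mul_le_of_le_one_left ht hwsum

theorem calibration_transfer_general (N : ℕ) (ℓ : ℝ → ℝ → ℝ)
    (hcont : ContinuousOn (fun z : ℝ × ℝ => ℓ z.1 z.2)
      (Set.Icc (0:ℝ) 1 ×ˢ Set.Icc (0:ℝ) 1))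
    (hℓ0 : ∀ x ∈ Set.Icc (0:ℝ) 1, ∀ y ∈ Set.Icc (0:ℝ) 1, 0 ≤ ℓ x y)
    (hpos : ∀ x ∈ Set.Icc (0:ℝ) 1, ∀ y ∈ Set.Icc (0:ℝ) 1, x ≠ y → 0 < ℓ x y) :
    ∀ ε > (0:ℝ), ∃ δ > (0:ℝ), ∀ w ρ x : Fin (N + 1) → ℝ,
      (∀ i, w i ∈ Set.Icc (0:ℝ) 1) → (∑ i, w i) ≤ 1 →
      (∀ i, ρ i ∈ Set.Icc (0:ℝ) 1 ∧ x i ∈ Set.Icc (0:ℝ) 1) →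
      (∑ i, w i * ℓ (ρ i) (x i)) ≤ δ →
      (∑ i, w i * |ρ i - x i|) ≤ ε := by
  intro ε hε
  obtain ⟨c, hc, hcle⟩ := exists_pos_le_of_le_dist (isCompact_Icc.prod isCompact_Icc) hcont
    (fun z hz => hpos z.1 hz.1 z.2 hz.2) (half_pos hε)
  refine ⟨c * (ε / 2), by positivity, fun w ρ x hw hwsum hρx hsum => ?_⟩
  have hpointwise (i : Fin (N + 1)) : |ρ i - x i| ≤ ε / 2 + ℓ (ρ i) (x i) / c := by
    obtain ⟨⟨hρ0, hρ1⟩, ⟨hx0, hx1⟩⟩ := hρx i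
    exact le_add_div_of_le_imp (abs_sub_le_of_nonneg_of_le hρ0 hρ1 hx0 hx1) (half_pos hε).le hc
      (hℓ0 _ (hρx i).1 _ (hρx i).2) (hcle (ρ i, x i) (hρx i))
  calc ∑ i, w i * |ρ i - x i|
      ≤ ε / 2 + (∑ i, w i * ℓ (ρ i) (x i)) / c :=
        sum_mul_le_add_sum_mul_div (fun i => (hw i).1) hwsum (half_pos hε).le hpointwise
    _ ≤ ε / 2 + c * (ε / 2) / c := by gcongr
    _ = ε := by field_simp; ring

/-- If `ℓ` is continuous on `[0,1]²`, convex in its first argument, vanishes on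
the diagonal and is positive off it, then small weighted `ℓ`-calibration error
implies small weighted ℓ₁ calibration error. -/
theorem calibration_transfer (N : ℕ) (ℓ : ℝ → ℝ → ℝ)
    (hcont : ContinuousOn (fun z : ℝ × ℝ => ℓ z.1 z.2)
      (Set.Icc (0:ℝ) 1 ×ˢ Set.Icc (0:ℝ) 1))
    (hconv : ∀ x ∈ Set.Icc (0:ℝ) 1, ConvexOn ℝ (Set.Icc (0:ℝ) 1) (fun r => ℓ r x))
    (hℓ0 : ∀ x ∈ Set.Icc (0:ℝ) 1, ∀ y ∈ Set.Icc (0:ℝ) 1, 0 ≤ ℓ x y)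
    (hdiag : ∀ x ∈ Set.Icc (0:ℝ) 1, ℓ x x = 0)
    (hpos : ∀ x ∈ Set.Icc (0:ℝ) 1, ∀ y ∈ Set.Icc (0:ℝ) 1, x ≠ y → 0 < ℓ x y) :
    ∀ ε > (0:ℝ), ∃ δ > (0:ℝ), ∀ w ρ x : Fin (N + 1) → ℝ,
      (∀ i, w i ∈ Set.Icc (0:ℝ) 1) → (∑ i, w i) ≤ 1 →
      (∀ i, ρ i ∈ Set.Icc (0:ℝ) 1 ∧ x i ∈ Set.Icc (0:ℝ) 1) →
      (∑ i, w i * ℓ (ρ i) (x i)) ≤ δ →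
      (∑ i, w i * |ρ i - x i|) ≤ ε :=
  calibration_transfer_general N ℓ hcont hℓ0 hpos
end
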